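/- arXiv:2510.13793 — 2 statements merged into one kernel-verified Lean document; each statement's English description precedes it below -/
import Mathlib

section
/- Let d ≥ 2, let X be a random vector in ℝ^d distributed according to the standard Gaussian measure N(0, I_d), and let v ∈ ℝ^d be a fixed unit vector. Then for every τ ∈ [0, 1], the probability that ⟨X, v⟩ ≥ τ‖X‖ is at most exp(−(d−1)τ²/2). -/
/-!
Choose an orthonormal basis whose first vector is `v`: in its coordinates `X` has i.i.d. standard
normal coordinates `y₀` and `z = (y₁, …, y_{d-1})`, and the event reads `τ‖y‖ ≤ y₀`. For `τ < 1`
this means `√s ‖z‖ ≤ y₀` with `s = τ² / (1 - τ²)`. Conditioning on `z` and the Chernoff bound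
`P(c ≤ y₀) ≤ exp(-c²/2)` bound the probability by `E[exp(-s‖z‖²/2)] = (1 + s)^{-(d-1)/2}`,
which is `(1 - τ²)^{(d-1)/2} ≤ exp(-(d-1)τ²/2)`. The cap for `τ = 1` lies in all the others, so
that case follows by letting `τ ↑ 1`.
-/

open MeasureTheory Real
open scoped RealInnerProductSpace ENNReal

/-- The standard Gaussian measure `N(0, I_d)` on `ℝ^d`, realized as `EuclideanSpace ℝ (Fin d)`:
the product of `d` one-dimensional standard normal distributions. -/
noncomputable def stdGaussian (d : ℕ) : Measure (EuclideanSpace ℝ (Fin d)) :=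
  (Measure.pi fun _ : Fin d => ProbabilityTheory.gaussianReal 0 1).map
    (MeasurableEquiv.toLp 2 (Fin d → ℝ))

open Filter Topology

section

open ProbabilityTheory

lemma gaussianReal_real_Ici_le_exp {c : ℝ} (hc : 0 ≤ c) :
    (gaussianReal 0 1).real (Set.Ici c) ≤ exp (-(c ^ 2 / 2)) :=
  calc (gaussianReal 0 1).real (Set.Ici c) ≤ exp (-c * c) * mgf id (gaussianReal 0 1) c :=
        measure_ge_le_exp_mul_mgf c hc (integrable_exp_mul_gaussianReal c)
    _ = exp (-(c ^ 2 / 2)) := by rw [mgf_id_gaussianReal, ← exp_add]; push_cast; ring_nf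

-- For `s ≤ -1` both sides are junk zeros: the integrand is not integrable and `√(1 + s) = 0`.
lemma integral_exp_neg_mul_sq_gaussianReal (s : ℝ) :
    ∫ t, exp (-(s * t ^ 2 / 2)) ∂gaussianReal 0 1 = 1 / √(1 + s) := by
  have hdens (t : ℝ) : gaussianPDFReal 0 1 t * exp (-(s * t ^ 2 / 2))
      = (√(2 * π))⁻¹ * exp (-((1 + s) / 2) * t ^ 2) := by
    rw [gaussianPDFReal, mul_assoc, ← exp_add]
    push_cast
    ring_nf
  simp_rw [integral_gaussianReal_eq_integral_smul one_ne_zero, smul_eq_mul, hdens,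
    integral_const_mul, integral_gaussian]
  rw [div_div_eq_mul_div, mul_comm π, sqrt_div (by positivity), ← mul_div_assoc,
    inv_mul_cancel₀ (by positivity)]

lemma integral_exp_neg_mul_sum_sq_pi_gaussianReal (ι : Type*) [Fintype ι] (s : ℝ) :
    ∫ z, exp (-(s * (∑ j, z j ^ 2) / 2)) ∂Measure.pi (fun _ : ι => gaussianReal 0 1)
      = (1 / √(1 + s)) ^ Fintype.card ι := by
  have hprod (z : ι → ℝ) : exp (-(s * (∑ j, z j ^ 2) / 2)) = ∏ j, exp (-(s * z j ^ 2 / 2)) := by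
    rw [← exp_sum, Finset.mul_sum, Finset.sum_div, Finset.sum_neg_distrib]
  simp_rw [hprod]
  rw [integral_fintype_prod_eq_pow (fun t => exp (-(s * t ^ 2 / 2))),
    integral_exp_neg_mul_sq_gaussianReal]

lemma norm_sum_smul_orthonormalBasis {ι : Type*} [Fintype ι] {E : Type*} [NormedAddCommGroup E]
    [InnerProductSpace ℝ E] (b : OrthonormalBasis ι ℝ E) (y : ι → ℝ) :
    ‖∑ i, y i • b i‖ = √(∑ i, y i ^ 2) := by
  have := b.sum_repr_symm (WithLp.toLp 2 y)
  simp only at this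
  rw [this, b.repr.symm.norm_map, EuclideanSpace.norm_eq]
  simp

lemma sqrt_mul_le_of_mul_sqrt_sq_add_le {τ t r : ℝ} (hτ0 : 0 ≤ τ) (hτ1 : τ < 1) (hr : 0 ≤ r)
    (h : τ * √(t ^ 2 + r) ≤ t) : √(τ ^ 2 / (1 - τ ^ 2) * r) ≤ t := by
  have ht : 0 ≤ t := (by positivity : 0 ≤ τ * √(t ^ 2 + r)).trans h
  have hsq : τ ^ 2 * (t ^ 2 + r) ≤ t ^ 2 := by
    have := pow_le_pow_left₀ (by positivity) h 2
    rwa [mul_pow, sq_sqrt (by positivity)] at this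
  refine sqrt_le_iff.mpr ⟨ht, ?_⟩
  rw [div_mul_eq_mul_div, div_le_iff₀ (by nlinarith)]
  nlinarith

lemma gaussianReal_prod_pi_cone_le (ι : Type*) [Fintype ι] {s : ℝ} (hs : 0 ≤ s) :
    ((gaussianReal 0 1).prod (Measure.pi fun _ : ι => gaussianReal 0 1))
        {p | √(s * ∑ j, p.2 j ^ 2) ≤ p.1}
      ≤ ENNReal.ofReal ((1 / √(1 + s)) ^ Fintype.card ι) := by
  have hB : MeasurableSet {p : ℝ × (ι → ℝ) | √(s * ∑ j, p.2 j ^ 2) ≤ p.1} :=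
    measurableSet_le (by fun_prop) measurable_fst
  have htail (z : ι → ℝ) : gaussianReal 0 1 {t | √(s * ∑ j, z j ^ 2) ≤ t}
      ≤ ENNReal.ofReal (exp (-(s * (∑ j, z j ^ 2) / 2))) := by
    rw [← ofReal_measureReal]
    refine ENNReal.ofReal_le_ofReal ((gaussianReal_real_Ici_le_exp (sqrt_nonneg _)).trans_eq ?_)
    rw [sq_sqrt (by positivity), mul_div_assoc]
  calc _ = ∫⁻ z, gaussianReal 0 1 {t | √(s * ∑ j, z j ^ 2) ≤ t}
          ∂Measure.pi fun _ : ι => gaussianReal 0 1 := Measure.prod_apply_symm hB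
    _ ≤ ∫⁻ z, ENNReal.ofReal (exp (-(s * (∑ j, z j ^ 2) / 2)))
          ∂Measure.pi fun _ : ι => gaussianReal 0 1 := lintegral_mono htail
    _ = _ := by
      rw [← ofReal_integral_eq_lintegral_ofReal, integral_exp_neg_mul_sum_sq_pi_gaussianReal]
      · refine Integrable.of_bound (by fun_prop : Continuous _).aestronglyMeasurable 1
          (ae_of_all _ fun z => ?_)
        rw [norm_of_nonneg (exp_pos _).le, exp_le_one_iff, neg_nonpos]
        positivity
      · exact ae_of_all _ fun _ => (exp_pos _).le

lemma pi_gaussianReal_cap_le (n : ℕ) {τ : ℝ} (hτ0 : 0 ≤ τ) (hτ1 : τ < 1) :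
    (Measure.pi fun _ : Fin (n + 1) => gaussianReal 0 1) {y | τ * √(∑ i, y i ^ 2) ≤ y 0}
      ≤ ENNReal.ofReal (√(1 - τ ^ 2) ^ n) := by
  have hτ2 : 0 < 1 - τ ^ 2 := by nlinarith
  have hs : 0 ≤ τ ^ 2 / (1 - τ ^ 2) := by positivity
  have hsτ : 1 / √(1 + τ ^ 2 / (1 - τ ^ 2)) = √(1 - τ ^ 2) := by
    rw [one_add_div hτ2.ne', sub_add_cancel, sqrt_div' _ hτ2.le, sqrt_one, one_div_one_div]
  have hcap : MeasurableSet {y : Fin (n + 1) → ℝ | τ * √(∑ i, y i ^ 2) ≤ y 0} :=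
    measurableSet_le (by fun_prop) (by fun_prop)
  have hpres :=
    (measurePreserving_piFinSuccAbove (fun _ : Fin (n + 1) => gaussianReal 0 1) 0).symm
  calc _ = ((gaussianReal 0 1).prod (Measure.pi fun _ : Fin n => gaussianReal 0 1))
          ((MeasurableEquiv.piFinSuccAbove (fun _ => ℝ) 0).symm ⁻¹'
            {y | τ * √(∑ i, y i ^ 2) ≤ y 0}) :=
        (hpres.measure_preimage hcap.nullMeasurableSet).symm
    _ ≤ ((gaussianReal 0 1).prod (Measure.pi fun _ : Fin n => gaussianReal 0 1))
          {p | √(τ ^ 2 / (1 - τ ^ 2) * ∑ j, p.2 j ^ 2) ≤ p.1} := by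
      refine measure_mono fun p hp => ?_
      simp only [MeasurableEquiv.piFinSuccAbove_symm_apply, Fin.insertNthEquiv_zero,
        Fin.sum_univ_succ, Set.preimage_ofPred_eq, Fin.consEquiv_apply, Fin.cons_zero,
        Fin.cons_succ, Set.mem_ofPred_eq] at hp
      exact sqrt_mul_le_of_mul_sqrt_sq_add_le hτ0 hτ1 (by positivity) hp
    _ ≤ _ := (gaussianReal_prod_pi_cone_le (Fin n) hs).trans_eq (by rw [hsτ, Fintype.card_fin])

end

open ProbabilityTheory (gaussianReal)

lemma stdGaussian_eq_stdGaussian_euclideanSpace (d : ℕ) :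
    stdGaussian d = ProbabilityTheory.stdGaussian (EuclideanSpace ℝ (Fin d)) :=
  ProbabilityTheory.map_pi_eq_stdGaussian

instance (d : ℕ) : IsProbabilityMeasure (stdGaussian d) := by
  rw [stdGaussian_eq_stdGaussian_euclideanSpace]
  infer_instance

lemma stdGaussian_cap_eq_pi_gaussianReal {d : ℕ} (i : Fin d) {v : EuclideanSpace ℝ (Fin d)}
    (hv : ‖v‖ = 1) (τ : ℝ) :
    stdGaussian d {x | τ * ‖x‖ ≤ ⟪x, v⟫}
      = Measure.pi (fun _ : Fin d => gaussianReal 0 1) {y | τ * √(∑ j, y j ^ 2) ≤ y i} := by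
  have hvi : Orthonormal ℝ (({i} : Set (Fin d)).domRestrict fun _ => v) := by
    rw [orthonormal_iff_ite]
    rintro ⟨j, hj⟩ ⟨k, hk⟩
    rw [Set.mem_singleton_iff] at hj hk
    subst hj hk
    simp [hv]
  obtain ⟨b, hb⟩ := hvi.exists_orthonormalBasis_extension_of_card_eq (by simp)
  have hbi : b i = v := hb i rfl
  have hcap : MeasurableSet {x : EuclideanSpace ℝ (Fin d) | τ * ‖x‖ ≤ ⟪x, v⟫} :=
    measurableSet_le (by fun_prop) (by fun_prop)
  rw [stdGaussian_eq_stdGaussian_euclideanSpace,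
    ProbabilityTheory.stdGaussian_eq_map_pi_orthonormalBasis b,
    Measure.map_apply (by fun_prop) hcap]
  congr 1
  ext y
  simp [norm_sum_smul_orthonormalBasis, ← hbi, b.orthonormal.inner_left_fintype]

lemma sqrt_one_sub_sq_pow_le_exp (n : ℕ) (τ : ℝ) :
    √(1 - τ ^ 2) ^ n ≤ exp (-(n * τ ^ 2 / 2)) := by
  have h : √(1 - τ ^ 2) ≤ exp (-(τ ^ 2 / 2)) := by
    refine sqrt_le_iff.mpr ⟨(exp_pos _).le, ?_⟩
    calc 1 - τ ^ 2 ≤ exp (-τ ^ 2) := by linarith [add_one_le_exp (-τ ^ 2)]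
      _ = exp (-(τ ^ 2 / 2)) ^ 2 := by rw [← exp_nat_mul]; ring_nf
  calc _ ≤ exp (-(τ ^ 2 / 2)) ^ n := pow_le_pow_left₀ (sqrt_nonneg _) h n
    _ = _ := by rw [← exp_nat_mul]; ring_nf

lemma stdGaussian_real_cap_le_exp_of_lt_one {d : ℕ} {v : EuclideanSpace ℝ (Fin d)}
    (hv : ‖v‖ = 1) {τ : ℝ} (hτ0 : 0 ≤ τ) (hτ1 : τ < 1) :
    (stdGaussian d).real {x | τ * ‖x‖ ≤ ⟪x, v⟫} ≤ exp (-(((d : ℝ) - 1) * τ ^ 2 / 2)) := by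
  obtain ⟨n, rfl⟩ : ∃ n, d = n + 1 :=
    Nat.exists_eq_succ_of_ne_zero (by rintro rfl; simp [Subsingleton.elim v 0] at hv)
  rw [measureReal_def, stdGaussian_cap_eq_pi_gaussianReal 0 hv]
  refine ENNReal.toReal_le_of_le_ofReal (exp_pos _).le
    ((pi_gaussianReal_cap_le n hτ0 hτ1).trans (ENNReal.ofReal_le_ofReal ?_))
  push_cast
  rw [add_sub_cancel_right]
  exact sqrt_one_sub_sq_pow_le_exp n τ

theorem gaussian_cosine_cap_prob_le_exp_general (d : ℕ)
    (v : EuclideanSpace ℝ (Fin d)) (hv : ‖v‖ = 1)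
    (τ : ℝ) (hτ : τ ∈ Set.Icc (0 : ℝ) 1) :
    (stdGaussian d {x | τ * ‖x‖ ≤ ⟪x, v⟫}).toReal
      ≤ Real.exp (-(((d : ℝ) - 1) * τ ^ 2 / 2)) := by
  obtain ⟨hτ0, hτ1⟩ := hτ
  rcases hτ1.lt_or_eq with hτ1 | rfl
  · exact stdGaussian_real_cap_le_exp_of_lt_one hv hτ0 hτ1
  have hbound : Continuous fun τ : ℝ => exp (-(((d : ℝ) - 1) * τ ^ 2 / 2)) := by fun_prop
  refine ge_of_tendsto (x := 𝓝[<] 1) ((hbound.tendsto 1).mono_left nhdsWithin_le_nhds) ?_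
  filter_upwards [Ioo_mem_nhdsLT one_pos] with τ hτ
  have hcap_subset : {x | 1 * ‖x‖ ≤ ⟪x, v⟫} ⊆ {x | τ * ‖x‖ ≤ ⟪x, v⟫} := fun x hx =>
    (mul_le_mul_of_nonneg_right hτ.2.le (norm_nonneg x)).trans hx
  exact (measureReal_mono hcap_subset).trans
    (stdGaussian_real_cap_le_exp_of_lt_one hv hτ.1.le hτ.2)

/-- **Exponential bound on the spherical-cap probability.** For `d ≥ 2`, a standard Gaussian
vector `X` in `ℝ^d` and a fixed unit vector `v`, for every `τ ∈ [0, 1]` the probability that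
`⟪X, v⟫ ≥ τ‖X‖` (i.e. that the cosine similarity of `X` and `v` is at least `τ`) is at most
`exp(-(d-1)τ²/2)`. -/
theorem gaussian_cosine_cap_prob_le_exp (d : ℕ) (hd : 2 ≤ d)
    (v : EuclideanSpace ℝ (Fin d)) (hv : ‖v‖ = 1)
    (τ : ℝ) (hτ : τ ∈ Set.Icc (0 : ℝ) 1) :
    (stdGaussian d {x | τ * ‖x‖ ≤ ⟪x, v⟫}).toReal
      ≤ Real.exp (-(((d : ℝ) - 1) * τ ^ 2 / 2)) :=
  gaussian_cosine_cap_prob_le_exp_general d v hv τ hτ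
end

section
/- For every integer d ≥ 2 and every τ ∈ [0, 1], the following analytic inequality holds: (Γ(d/2) / (√π · Γ((d-1)/2))) · ∫_τ^1 (1 - t²)^{(d-3)/2} dt ≤ exp(−(d−1)τ²/2). Equivalently, ½·I_{1-τ²}((d-1)/2, 1/2) ≤ exp(−(d−1)τ²/2), where I_x(p,q) is the regularized incomplete beta function. -/
/-!
With `p = (d - 1) / 2`, the substitution `s = 1 - t²` turns the cap integral into
`½ I_{1-τ²}(p, 1/2)`. If `p τ² ≤ 1/2`, the trivial bound `I ≤ 1` suffices since `e^{-1/2} ≥ 1/2`.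
Otherwise `(1 - s)^{-1/2} ≤ 1/τ` on `[0, 1 - τ²]` gives
`I ≤ Γ(p + ½) / (Γ(p) √π) · (1 - τ²)^p / (p τ)`; log-convexity of `Γ` gives
`Γ(p + ½) ≤ √p Γ(p)`, so `½ I ≤ (1 - τ²)^p / (2τ √(π p)) ≤ (1 - τ²)^p ≤ e^{-pτ²}`,
using `4π p τ² > 1`.
-/

open Real

/-- The regularized incomplete beta function `I_x(p, q)`. -/
noncomputable def regIncBeta (p q x : ℝ) : ℝ :=
  (Real.Gamma (p + q) / (Real.Gamma p * Real.Gamma q)) *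
    ∫ t in (0 : ℝ)..x, t ^ (p - 1) * (1 - t) ^ (q - 1)

open MeasureTheory Set

lemma Complex.betaIntegral_ofReal {p q : ℝ} :
    Complex.betaIntegral p q = ((∫ s in (0 : ℝ)..1, s ^ (p - 1) * (1 - s) ^ (q - 1) : ℝ) : ℂ) := by
  rw [Complex.betaIntegral, ← intervalIntegral.integral_ofReal]
  refine intervalIntegral.integral_congr fun s hs => ?_
  rw [uIcc_of_le zero_le_one] at hs
  push_cast
  rw [Complex.ofReal_cpow hs.1, Complex.ofReal_cpow (sub_nonneg.2 hs.2)]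
  push_cast
  ring_nf

lemma intervalIntegrable_rpow_mul_one_sub_rpow {p q : ℝ} (hp : 0 < p) (hq : 0 < q) :
    IntervalIntegrable (fun s : ℝ => s ^ (p - 1) * (1 - s) ^ (q - 1)) volume 0 1 := by
  have h := (Complex.betaIntegral_convergent (u := p) (v := q) (by simpa) (by simpa)).1.re
  refine (intervalIntegrable_iff_integrableOn_Ioc_of_le zero_le_one).2
    (IntegrableOn.congr_fun h (fun s hs => ?_) measurableSet_Ioc)
  rw [show (1 - (s : ℂ)) = ((1 - s : ℝ) : ℂ) by push_cast; ring,
    ← Complex.ofReal_one, ← Complex.ofReal_sub, ← Complex.ofReal_sub,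
    ← Complex.ofReal_cpow hs.1.le, ← Complex.ofReal_cpow (sub_nonneg.2 hs.2),
    ← Complex.ofReal_mul]
  exact Complex.ofReal_re _

theorem Real.Gamma_mul_Gamma_eq_mul_integral {p q : ℝ} (hp : 0 < p) (hq : 0 < q) :
    Gamma p * Gamma q = Gamma (p + q) * ∫ s in (0 : ℝ)..1, s ^ (p - 1) * (1 - s) ^ (q - 1) := by
  have h := Complex.Gamma_mul_Gamma_eq_betaIntegral (s := p) (t := q) (by simpa) (by simpa)
  rw [Complex.betaIntegral_ofReal, ← Complex.ofReal_add, Complex.Gamma_ofReal, Complex.Gamma_ofReal,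
    Complex.Gamma_ofReal, ← Complex.ofReal_mul, ← Complex.ofReal_mul] at h
  exact_mod_cast h

theorem Real.Gamma_add_half_le {p : ℝ} (hp : 0 < p) : Gamma (p + 1 / 2) ≤ √p * Gamma p := by
  have h := Gamma_mul_add_mul_le_rpow_Gamma_mul_rpow_Gamma hp (by linarith : 0 < p + 1)
    one_half_pos one_half_pos (add_halves 1)
  have hΓ := (Gamma_pos_of_pos hp).le
  rw [Gamma_add_one hp.ne', mul_rpow hp.le hΓ] at h
  calc Gamma (p + 1 / 2) = Gamma (1 / 2 * p + 1 / 2 * (p + 1)) := by ring_nf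
    _ ≤ Gamma p ^ (1 / 2 : ℝ) * (p ^ (1 / 2 : ℝ) * Gamma p ^ (1 / 2 : ℝ)) := h
    _ = √p * Gamma p := by
      rw [← sqrt_eq_rpow, ← sqrt_eq_rpow, mul_left_comm, ← sqrt_mul hΓ, sqrt_mul_self hΓ]

lemma one_sub_rpow_le_exp_neg {x p : ℝ} (hx : x ≤ 1) (hp : 0 ≤ p) :
    (1 - x) ^ p ≤ exp (-(p * x)) :=
  calc (1 - x) ^ p ≤ exp (-x) ^ p := rpow_le_rpow (by linarith) (one_sub_le_exp_neg x) hp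
    _ = exp (-(p * x)) := by rw [← exp_mul]; ring_nf

lemma integral_comp_one_sub_sq {τ : ℝ} (hτ0 : 0 ≤ τ) (hτ1 : τ ≤ 1) (f : ℝ → ℝ) :
    ∫ s in (0 : ℝ)..1 - τ ^ 2, f s * (1 - s) ^ (-(1 / 2) : ℝ) = 2 * ∫ t in τ..1, f (1 - t ^ 2) := by
  have himage : (fun t : ℝ => 1 - t ^ 2) '' Ioo τ 1 = Ioo 0 (1 - τ ^ 2) := by
    ext s
    constructor
    · rintro ⟨t, ⟨hτt, ht1⟩, rfl⟩
      constructor <;> nlinarith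
    · rintro ⟨hs0, hs1⟩
      refine ⟨√(1 - s), ⟨(lt_sqrt hτ0).2 (by linarith), (sqrt_lt' one_pos).2 (by linarith)⟩, ?_⟩
      simp only [sq_sqrt (by nlinarith : 0 ≤ 1 - s), sub_sub_cancel]
  have hderiv : ∀ t ∈ Ioo τ 1, HasDerivWithinAt (fun t : ℝ => 1 - t ^ 2) (-(2 * t)) (Ioo τ 1) t :=
    fun t _ => by simpa using ((hasDerivAt_pow 2 t).const_sub 1).hasDerivWithinAt
  have hinj : InjOn (fun t : ℝ => 1 - t ^ 2) (Ioo τ 1) := fun a ha b hb hab => by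
    simp only [sub_right_inj] at hab
    nlinarith [ha.1, hb.1]
  rw [intervalIntegral.integral_of_le (by nlinarith), intervalIntegral.integral_of_le hτ1,
    integral_Ioc_eq_integral_Ioo, integral_Ioc_eq_integral_Ioo, ← himage,
    integral_image_eq_integral_abs_deriv_smul measurableSet_Ioo hderiv hinj,
    ← integral_const_mul]
  refine setIntegral_congr_fun measurableSet_Ioo fun t ht => ?_
  have ht0 : 0 < t := hτ0.trans_lt ht.1
  have hsq : (t ^ 2) ^ (-(1 / 2) : ℝ) = t⁻¹ := by
    rw [rpow_neg (by positivity), ← sqrt_eq_rpow, sqrt_sq ht0.le]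
  simp only [smul_eq_mul, sub_sub_cancel, hsq, abs_neg, abs_of_pos (by positivity : 0 < 2 * t)]
  field_simp

lemma regIncBeta_le_one {p q x : ℝ} (hp : 0 < p) (hq : 0 < q) (hx0 : 0 ≤ x) (hx1 : x ≤ 1) :
    regIncBeta p q x ≤ 1 := by
  have hΓ : 0 < Gamma p * Gamma q := mul_pos (Gamma_pos_of_pos hp) (Gamma_pos_of_pos hq)
  have hmono : ∫ s in (0 : ℝ)..x, s ^ (p - 1) * (1 - s) ^ (q - 1)
      ≤ ∫ s in (0 : ℝ)..1, s ^ (p - 1) * (1 - s) ^ (q - 1) := by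
    refine intervalIntegral.integral_mono_interval le_rfl hx0 hx1 ?_
      (intervalIntegrable_rpow_mul_one_sub_rpow hp hq)
    filter_upwards [ae_restrict_mem measurableSet_Ioc] with s hs
    exact mul_nonneg (rpow_nonneg hs.1.le _) (rpow_nonneg (sub_nonneg.2 hs.2) _)
  rw [regIncBeta, div_mul_eq_mul_div, div_le_one hΓ, Gamma_mul_Gamma_eq_mul_integral hp hq]
  exact mul_le_mul_of_nonneg_left hmono (Gamma_pos_of_pos (add_pos hp hq)).le

lemma regIncBeta_one_half_le {p τ : ℝ} (hp : 0 < p) (hτ0 : 0 < τ) (hτ1 : τ ≤ 1) :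
    regIncBeta p (1 / 2) (1 - τ ^ 2)
      ≤ Gamma (p + 1 / 2) / (Gamma p * √π) * ((1 - τ ^ 2) ^ p / (p * τ)) := by
  have hx0 : 0 ≤ 1 - τ ^ 2 := by nlinarith
  have hint : IntervalIntegrable (fun s : ℝ => s ^ (p - 1) * (1 - s) ^ (1 / 2 - 1 : ℝ))
      volume 0 (1 - τ ^ 2) :=
    (intervalIntegrable_rpow_mul_one_sub_rpow hp one_half_pos).mono_set
      (uIcc_subset_uIcc left_mem_uIcc (by rw [uIcc_of_le zero_le_one]; constructor <;> nlinarith))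
  have hbound : ∫ s in (0 : ℝ)..1 - τ ^ 2, s ^ (p - 1) * (1 - s) ^ (1 / 2 - 1 : ℝ)
      ≤ ∫ s in (0 : ℝ)..1 - τ ^ 2, τ⁻¹ * s ^ (p - 1) := by
    refine intervalIntegral.integral_mono_on hx0 hint
      ((intervalIntegral.intervalIntegrable_rpow' (by linarith)).const_mul τ⁻¹) fun s hs => ?_
    have hτinv : (τ ^ 2) ^ (1 / 2 - 1 : ℝ) = τ⁻¹ := by
      rw [show (1 / 2 - 1 : ℝ) = -(1 / 2) by norm_num, rpow_neg (by positivity), ← sqrt_eq_rpow,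
        sqrt_sq hτ0.le]
    rw [mul_comm τ⁻¹, ← hτinv]
    exact mul_le_mul_of_nonneg_left
      (rpow_le_rpow_of_nonpos (by positivity) (by linarith [hs.2]) (by norm_num))
      (rpow_nonneg hs.1 _)
  rw [intervalIntegral.integral_const_mul, integral_rpow (Or.inl (by linarith)), sub_add_cancel,
    zero_rpow hp.ne', sub_zero] at hbound
  rw [regIncBeta, Gamma_one_half_eq,
    show (1 - τ ^ 2) ^ p / (p * τ) = τ⁻¹ * ((1 - τ ^ 2) ^ p / p) by field_simp]
  gcongr

lemma half_regIncBeta_le_of_half_lt {p τ : ℝ} (hp : 0 < p) (hτ0 : 0 < τ) (hτ1 : τ ≤ 1)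
    (hpτ : 1 / 2 < p * τ ^ 2) :
    1 / 2 * regIncBeta p (1 / 2) (1 - τ ^ 2) ≤ (1 - τ ^ 2) ^ p := by
  have hπ : 0 < √π := sqrt_pos.2 pi_pos
  have hratio : Gamma (p + 1 / 2) / (Gamma p * √π) ≤ √p / √π := by
    rw [div_le_div_iff₀ (mul_pos (Gamma_pos_of_pos hp) hπ) hπ, ← mul_assoc]
    exact mul_le_mul_of_nonneg_right (Gamma_add_half_le hp) hπ.le
  have hscale : 1 ≤ 2 * τ * √p * √π := by
    rw [← one_le_sq_iff₀ (by positivity), mul_pow, mul_pow, mul_pow, sq_sqrt hp.le,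
      sq_sqrt pi_pos.le]
    nlinarith [pi_gt_three]
  have hy : 0 ≤ (1 - τ ^ 2) ^ p := rpow_nonneg (by nlinarith) p
  calc 1 / 2 * regIncBeta p (1 / 2) (1 - τ ^ 2)
      ≤ 1 / 2 * (Gamma (p + 1 / 2) / (Gamma p * √π) * ((1 - τ ^ 2) ^ p / (p * τ))) := by
        gcongr
        exact regIncBeta_one_half_le hp hτ0 hτ1
    _ ≤ 1 / 2 * (√p / √π * ((1 - τ ^ 2) ^ p / (p * τ))) := by gcongr
    _ = (1 - τ ^ 2) ^ p / (2 * τ * √p * √π) := by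
        field_simp
        rw [sq_sqrt hp.le, mul_comm]
    _ ≤ (1 - τ ^ 2) ^ p := div_le_self hy hscale

lemma half_regIncBeta_le_exp {p τ : ℝ} (hp : 0 < p) (hτ0 : 0 ≤ τ) (hτ1 : τ ≤ 1) :
    1 / 2 * regIncBeta p (1 / 2) (1 - τ ^ 2) ≤ exp (-(p * τ ^ 2)) := by
  rcases le_or_gt (p * τ ^ 2) (1 / 2) with hsmall | hlarge
  · calc 1 / 2 * regIncBeta p (1 / 2) (1 - τ ^ 2) ≤ 1 / 2 * 1 := by
          gcongr
          exact regIncBeta_le_one hp one_half_pos (by nlinarith) (by nlinarith)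
      _ ≤ exp (-(1 / 2)) := by linarith [one_sub_le_exp_neg (1 / 2)]
      _ ≤ exp (-(p * τ ^ 2)) := exp_le_exp.2 (neg_le_neg hsmall)
  · have hτ : 0 < τ := hτ0.lt_of_ne (by rintro rfl; norm_num at hlarge)
    exact (half_regIncBeta_le_of_half_lt hp hτ hτ1 hlarge).trans
      (one_sub_rpow_le_exp_neg (by nlinarith) hp.le)

lemma cap_integral_eq_half_regIncBeta {p τ : ℝ} (hτ0 : 0 ≤ τ) (hτ1 : τ ≤ 1) :
    Gamma (p + 1 / 2) / (√π * Gamma p) * ∫ t in τ..1, (1 - t ^ 2) ^ (p - 1)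
      = 1 / 2 * regIncBeta p (1 / 2) (1 - τ ^ 2) := by
  have h := integral_comp_one_sub_sq hτ0 hτ1 (fun s => s ^ (p - 1))
  rw [regIncBeta, Gamma_one_half_eq, show (1 / 2 - 1 : ℝ) = -(1 / 2) by norm_num, h]
  ring

/-- **Analytic spherical-cap inequality.** For every integer `d ≥ 2` and every `τ ∈ [0, 1]`,
`Γ(d/2) / (√π · Γ((d-1)/2)) · ∫_τ^1 (1 - t²)^((d-3)/2) dt ≤ exp(-(d-1)τ²/2)`; equivalently,
`(1/2) · I_{1-τ²}((d-1)/2, 1/2) ≤ exp(-(d-1)τ²/2)`. -/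
theorem cap_integral_le_exp (d : ℕ) (hd : 2 ≤ d) (τ : ℝ) (hτ : τ ∈ Set.Icc (0 : ℝ) 1) :
    (Real.Gamma ((d : ℝ) / 2) / (Real.sqrt π * Real.Gamma (((d : ℝ) - 1) / 2))) *
        (∫ t in τ..1, (1 - t ^ 2) ^ (((d : ℝ) - 3) / 2))
      ≤ Real.exp (-(((d : ℝ) - 1) * τ ^ 2 / 2)) ∧
    (1 / 2) * regIncBeta (((d : ℝ) - 1) / 2) (1 / 2) (1 - τ ^ 2)
      ≤ Real.exp (-(((d : ℝ) - 1) * τ ^ 2 / 2)) := by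
  obtain ⟨hτ0, hτ1⟩ := hτ
  have hp : 0 < ((d : ℝ) - 1) / 2 := by
    have : (2 : ℝ) ≤ d := by exact_mod_cast hd
    linarith
  have hbound := half_regIncBeta_le_exp hp hτ0 hτ1
  rw [show -(((d : ℝ) - 1) * τ ^ 2 / 2) = -(((d : ℝ) - 1) / 2 * τ ^ 2) by ring]
  refine ⟨?_, hbound⟩
  rwa [show (d : ℝ) / 2 = ((d : ℝ) - 1) / 2 + 1 / 2 by ring,
    show ((d : ℝ) - 3) / 2 = ((d : ℝ) - 1) / 2 - 1 by ring, cap_integral_eq_half_regIncBeta hτ0 hτ1]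
end
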